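/- Under hypotheses (a) σ is bounded by K, K-Lipschitz, differentiable with σ(0) = 0 and σ′(0) ≠ 0, with K-bounded, K-Lipschitz derivative; (b) every g ∈ L²(ν₀) with ∫ g(x) σ(u·x) dν₀(x) = 0 for all u ∈ ℝ^d vanishes ν₀-almost everywhere; and (c) for every u₁ ∈ ℝ^d, u₂, u₃ ∈ L_R^∞(P) and ε > 0, P({θ : ‖w(θ) − u₁‖ < ε, ‖W(·,θ) − u₂‖_{L²(P)} < ε, ‖W(θ,·) − u₃‖_{L²(P)} < ε}) > 0, the set of realizable network outputs { y ↦ ∫_Θ a(θ) G(θ; y, 0) dP(θ) : a ∈ L²(P) } is dense in L²(ν₀). -/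

import Mathlib

/-!
The realizable outputs form a subspace of `L²(ν₀)`, so it suffices to show that a `g` orthogonal
to all of them vanishes. Put `h_j(θ) = ∫ g(y) G_j(θ, y) dν₀(y)`. By Fubini, orthogonality to the
outputs with bounded coefficients says that `h_L` integrates to zero against every bounded test
function, so `h_L = 0` a.e. If `h_{j+1} = 0` a.e., diversity of the weights yields neurons `θₙ`
with `h_{j+1}(θₙ) = 0`, `w(θₙ) → 0` and `W(θₙ, ·) → v` in `L²(P)`; dominated convergence then
gives `∫ g σ(∫ v G_j) dν₀ = 0` for every bounded `v`. Applied to `v / n`, this linearises, since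
`σ(0) = 0` and `σ'(0) ≠ 0`, to `∫ g ∫ v G_j = 0`, i.e. `h_j = 0` a.e. Finally `h_0 = 0` a.e. and
diversity (now with `w(θₙ) → u`) give `∫ g(x) σ(u·x) dν₀ = 0` for all `u`, and the universal
approximation hypothesis forces `g = 0`.
-/

open MeasureTheory Filter Topology

/-- The unrolled recurrent-network features, parameterized by the number `j` of remaining
unrolling steps: `Gnet P T σ w W j` corresponds to `G(·; ·, L − j)` of the paper, i.e.
`Gnet ... 0 θ y = σ(w(θ)·y)` (level `k = L`) and
`Gnet ... (j+1) θ y = σ(∫ W(θ,θ') Gnet ... j θ' y dP(θ') + w(θ)·T^[j+1](y))`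
(level `k = L − (j+1)`, where `T^{L−k} = T^[j+1]`). -/
noncomputable def Gnet {Θ : Type*} [MeasurableSpace Θ] (P : Measure Θ) {d : ℕ}
    (T : EuclideanSpace ℝ (Fin d) → EuclideanSpace ℝ (Fin d))
    (σ : ℝ → ℝ) (w : Θ → EuclideanSpace ℝ (Fin d)) (W : Θ → Θ → ℝ) :
    ℕ → Θ → EuclideanSpace ℝ (Fin d) → ℝ
  | 0, θ, y => σ (inner ℝ (w θ) y)
  | (j + 1), θ, y =>
      σ ((∫ θ', W θ θ' * Gnet P T σ w W j θ' y ∂P) + inner ℝ (w θ) (T^[j + 1] y))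

lemma HasDerivAt.tendsto_succ_mul_comp_div {σ : ℝ → ℝ} {σ' : ℝ} (hσ : HasDerivAt σ σ' 0)
    (hσ0 : σ 0 = 0) (c : ℝ) :
    Tendsto (fun n : ℕ => ((n : ℝ) + 1) * σ (c / ((n : ℝ) + 1))) atTop (𝓝 (σ' * c)) := by
  have hd : HasDerivAt (fun t => σ (t * c)) (σ' * c) 0 := by
    have hσ : HasDerivAt σ σ' (0 * c) := by rwa [zero_mul]
    exact hσ.comp 0 (hasDerivAt_mul_const c)
  have hseq : Tendsto (fun n : ℕ => 1 / ((n : ℝ) + 1)) atTop (𝓝[≠] 0) :=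
    tendsto_nhdsWithin_of_tendsto_nhds_of_eventually_within _
      tendsto_one_div_add_atTop_nhds_zero_nat (Eventually.of_forall fun n => by
        simp only [Set.mem_compl_iff, Set.mem_singleton_iff]; positivity)
  refine ((hasDerivAt_iff_tendsto_slope.mp hd).comp hseq).congr fun n => ?_
  simp [slope_def_field, hσ0, div_eq_inv_mul]

section Analysis

variable {α : Type*} [MeasurableSpace α] {μ : Measure α}

lemma ae_eq_zero_of_forall_integral_mul_eq_zero {h : α → ℝ} (hh : Integrable h μ) {R : ℝ}
    (hR : 0 < R) (htest : ∀ v : α → ℝ, Measurable v → (∀ x, |v x| ≤ R) →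
      ∫ x, v x * h x ∂μ = 0) :
    h =ᵐ[μ] 0 := by
  refine hh.ae_eq_zero_of_forall_setIntegral_eq_zero fun s hs _ => ?_
  have hind := htest (s.indicator fun _ => R) (measurable_const.indicator hs) fun x => by
    by_cases hx : x ∈ s <;> simp [hx, abs_of_pos hR, hR.le]
  simp_rw [← Set.indicator_mul_left, integral_indicator hs, integral_const_mul] at hind
  exact (mul_eq_zero.mp hind).resolve_left hR.ne'

lemma integral_abs_le_sqrt_integral_sq [IsProbabilityMeasure μ] {f : α → ℝ}
    (hf : MemLp f 2 μ) : ∫ x, |f x| ∂μ ≤ √(∫ x, f x ^ 2 ∂μ) := by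
  have hvar := ProbabilityTheory.variance_nonneg |f| μ
  rw [ProbabilityTheory.variance_eq_sub hf.abs] at hvar
  simp only [Pi.pow_apply, Pi.abs_apply, sq_abs] at hvar
  exact (le_abs_self _).trans (Real.abs_le_sqrt (by linarith))

lemma integral_mul_eq_zero_of_tendsto {g : α → ℝ} (hg : Integrable g μ) {f : ℕ → α → ℝ}
    {F : α → ℝ} (hf : ∀ n, AEStronglyMeasurable (f n) μ) {C : ℝ}
    (hfC : ∀ n x, |f n x| ≤ C) (hfF : ∀ x, Tendsto (fun n => f n x) atTop (𝓝 (F x)))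
    (hzero : ∀ n, ∫ x, g x * f n x ∂μ = 0) :
    ∫ x, g x * F x ∂μ = 0 := by
  have hlim : Tendsto (fun n => ∫ x, g x * f n x ∂μ) atTop (𝓝 (∫ x, g x * F x ∂μ)) := by
    refine tendsto_integral_of_dominated_convergence (fun x => |g x| * C)
      (fun n => hg.aestronglyMeasurable.mul (hf n)) (hg.abs.mul_const C)
      (fun n => Eventually.of_forall fun x => ?_)
      (Eventually.of_forall fun x => (hfF x).const_mul (g x))
    rw [Real.norm_eq_abs, abs_mul]
    exact mul_le_mul_of_nonneg_left (hfC n x) (abs_nonneg _)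
  simp only [hzero] at hlim
  exact tendsto_nhds_unique hlim tendsto_const_nhds

lemma tendsto_integral_mul_of_tendsto_integral_abs_sub {ι : Type*} {l : Filter ι}
    {a : ι → α → ℝ} {b f : α → ℝ} (ha : ∀ i, Integrable (a i) μ) (hb : Integrable b μ)
    (hf : AEStronglyMeasurable f μ) {K : ℝ} (hfK : ∀ x, |f x| ≤ K)
    (hab : Tendsto (fun i => ∫ x, |a i x - b x| ∂μ) l (𝓝 0)) :
    Tendsto (fun i => ∫ x, a i x * f x ∂μ) l (𝓝 (∫ x, b x * f x ∂μ)) := by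
  rw [tendsto_iff_norm_sub_tendsto_zero]
  have hbound : Tendsto (fun i => (∫ x, |a i x - b x| ∂μ) * K) l (𝓝 0) := by
    simpa using hab.mul_const K
  refine squeeze_zero (fun _ => norm_nonneg _) (fun i => ?_) hbound
  rw [← integral_sub ((ha i).mul_bdd hf (Eventually.of_forall hfK))
    (hb.mul_bdd hf (Eventually.of_forall hfK)), ← integral_mul_const]
  refine norm_integral_le_of_norm_le (((ha i).sub hb).abs.mul_const K)
    (Eventually.of_forall fun x => ?_)
  rw [← sub_mul, norm_mul, Real.norm_eq_abs, Real.norm_eq_abs]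
  exact mul_le_mul_of_nonneg_left (hfK x) (abs_nonneg _)

lemma abs_integral_mul_le_mul [IsProbabilityMeasure μ] {v f : α → ℝ} {R K : ℝ}
    (hvR : ∀ x, |v x| ≤ R) (hfK : ∀ x, |f x| ≤ K) : |∫ x, v x * f x ∂μ| ≤ R * K := by
  have h := norm_integral_le_of_norm_le_const (μ := μ) (C := R * K)
    (Eventually.of_forall fun x => by
      rw [Real.norm_eq_abs, abs_mul]
      exact mul_le_mul (hvR x) (hfK x) (abs_nonneg _) ((abs_nonneg _).trans (hvR x)))
  rwa [probReal_univ, mul_one, Real.norm_eq_abs] at h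

lemma integral_mul_eq_zero_of_integral_mul_comp_div_eq_zero {σ : ℝ → ℝ} {σ' : ℝ} {K : NNReal}
    (hσ : LipschitzWith K σ) (hσd : HasDerivAt σ σ' 0) (hσ0 : σ 0 = 0) (hσ' : σ' ≠ 0) {g B : α → ℝ}
    (hg : Integrable g μ) (hB : AEStronglyMeasurable B μ) {C : ℝ} (hBC : ∀ y, |B y| ≤ C)
    (hzero : ∀ n : ℕ, ∫ y, g y * σ (B y / ((n : ℝ) + 1)) ∂μ = 0) :
    ∫ y, g y * B y ∂μ = 0 := by
  have hlin : ∫ y, g y * (σ' * B y) ∂μ = 0 := by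
    refine integral_mul_eq_zero_of_tendsto hg
      (f := fun n y => ((n : ℝ) + 1) * σ (B y / ((n : ℝ) + 1))) (C := K * C)
      (fun n => ((hσ.continuous.comp (continuous_id.div_const _)).comp_aestronglyMeasurable
        hB).const_mul _)
      (fun n y => ?_) (fun y => hσd.tendsto_succ_mul_comp_div hσ0 (B y)) fun n => ?_
    · have hn : (0 : ℝ) < n + 1 := by positivity
      calc |((n : ℝ) + 1) * σ (B y / ((n : ℝ) + 1))|
          ≤ ((n : ℝ) + 1) * (K * |B y / ((n : ℝ) + 1)|) := by
            rw [abs_mul, abs_of_pos hn]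
            exact mul_le_mul_of_nonneg_left (hσ.norm_le_mul hσ0 _) hn.le
        _ = K * |B y| := by rw [abs_div, abs_of_pos hn]; field_simp
        _ ≤ K * C := mul_le_mul_of_nonneg_left (hBC y) K.2
    · simp_rw [mul_left_comm (g _), integral_const_mul, hzero n, mul_zero]
  simp_rw [mul_left_comm (g _), integral_const_mul] at hlin
  exact (mul_eq_zero.mp hlin).resolve_left hσ'

end Analysis

section BoundedKernel

variable {Θ E : Type*} [MeasurableSpace Θ] [MeasurableSpace E] {P : Measure Θ} {ν : Measure E}
  {f : Θ → E → ℝ} {K : ℝ}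

lemma measurable_integral_mul_kernel [SFinite P] {v : Θ → ℝ} (hv : Measurable v)
    (hf : Measurable (Function.uncurry f)) :
    Measurable fun y => ∫ θ, v θ * f θ y ∂P :=
  (StronglyMeasurable.integral_prod_left (f := fun θ y => v θ * f θ y)
    ((hv.comp measurable_fst).mul hf).stronglyMeasurable).measurable

lemma integrable_integral_mul_kernel [IsFiniteMeasure P] [SFinite ν]
    (hf : Measurable (Function.uncurry f)) (hfK : ∀ θ y, |f θ y| ≤ K) {g : E → ℝ}
    (hg : Integrable g ν) : Integrable (fun θ => ∫ y, g y * f θ y ∂ν) P := by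
  refine Integrable.of_bound (AEStronglyMeasurable.integral_prod_right'
      (f := fun z : Θ × E => g z.2 * f z.1 z.2)
      ((hg.aestronglyMeasurable.comp_snd).mul hf.aestronglyMeasurable))
    (∫ y, |g y| * K ∂ν) (Eventually.of_forall fun θ => ?_)
  refine norm_integral_le_of_norm_le (hg.abs.mul_const K) (Eventually.of_forall fun y => ?_)
  rw [Real.norm_eq_abs, abs_mul]
  exact mul_le_mul_of_nonneg_left (hfK θ y) (abs_nonneg _)

lemma integral_mul_integral_mul_comm [SFinite P] [SFinite ν]
    (hf : Measurable (Function.uncurry f)) (hfK : ∀ θ y, |f θ y| ≤ K) {v : Θ → ℝ}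
    (hv : Integrable v P) {g : E → ℝ} (hg : Integrable g ν) :
    ∫ θ, v θ * ∫ y, g y * f θ y ∂ν ∂P = ∫ y, g y * ∫ θ, v θ * f θ y ∂P ∂ν := by
  have hprod : Integrable (Function.uncurry fun θ y => v θ * (g y * f θ y)) (P.prod ν) := by
    refine ((hv.mul_prod hg).mul_bdd hf.aestronglyMeasurable
      (Eventually.of_forall fun z => hfK z.1 z.2)).congr
      (Eventually.of_forall fun z => by simp [Function.uncurry, mul_assoc])
  simp_rw [← integral_const_mul]
  rw [integral_integral_swap hprod]
  simp_rw [mul_left_comm (v _)]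

noncomputable def outputSubmodule (P : Measure Θ) [IsFiniteMeasure P] (ν : Measure E)
    (f : Θ → E → ℝ) (hf : Measurable (Function.uncurry f)) (hfK : ∀ θ y, |f θ y| ≤ K) :
    Submodule ℝ (Lp ℝ 2 ν) where
  carrier := {F | ∃ a : Θ → ℝ, MemLp a 2 P ∧ (F : E → ℝ) =ᵐ[ν] fun y => ∫ θ, a θ * f θ y ∂P}
  zero_mem' := ⟨0, MemLp.zero, by
    filter_upwards [Lp.coeFn_zero ℝ 2 ν] with y hy
    simp only [hy, Pi.zero_apply, zero_mul, integral_zero]⟩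
  add_mem' := by
    rintro F₁ F₂ ⟨a₁, ha₁, hF₁⟩ ⟨a₂, ha₂, hF₂⟩
    refine ⟨a₁ + a₂, ha₁.add ha₂, ?_⟩
    have hint : ∀ a : Θ → ℝ, MemLp a 2 P → ∀ y, Integrable (fun θ => a θ * f θ y) P :=
      fun a ha y => (ha.integrable one_le_two).mul_bdd
        (hf.comp (measurable_id.prodMk measurable_const)).aestronglyMeasurable
        (Eventually.of_forall fun θ => hfK θ y)
    filter_upwards [Lp.coeFn_add F₁ F₂, hF₁, hF₂] with y h h₁ h₂
    simp only [h, Pi.add_apply, h₁, h₂, add_mul]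
    exact (integral_add (hint a₁ ha₁ y) (hint a₂ ha₂ y)).symm
  smul_mem' := by
    rintro c F ⟨a, ha, hF⟩
    refine ⟨c • a, ha.const_smul c, ?_⟩
    filter_upwards [Lp.coeFn_smul c F, hF] with y h h'
    simp only [h, Pi.smul_apply, h', smul_eq_mul, mul_assoc, integral_const_mul]

lemma ae_integral_mul_eq_zero_of_mem_orthogonal [IsProbabilityMeasure P] [IsFiniteMeasure ν]
    (hf : Measurable (Function.uncurry f)) (hfK : ∀ θ y, |f θ y| ≤ K) {g : Lp ℝ 2 ν}
    (hg : g ∈ (outputSubmodule P ν f hf hfK)ᗮ) :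
    (fun θ => ∫ y, g y * f θ y ∂ν) =ᵐ[P] 0 := by
  have hgi : Integrable g ν := (Lp.memLp g).integrable one_le_two
  refine ae_eq_zero_of_forall_integral_mul_eq_zero (integrable_integral_mul_kernel hf hfK hgi)
    one_pos fun v hv hvR => ?_
  rw [integral_mul_integral_mul_comm hf hfK
    (.of_bound hv.aestronglyMeasurable 1 (Eventually.of_forall hvR)) hgi]
  have hF : MemLp (fun y => ∫ θ, v θ * f θ y ∂P) 2 ν :=
    .of_bound (measurable_integral_mul_kernel hv hf).aestronglyMeasurable (1 * K)
      (Eventually.of_forall fun y => abs_integral_mul_le_mul hvR (hfK · y))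
  have hinner := (Submodule.mem_orthogonal' _ _).mp hg (hF.toLp _)
    ⟨v, .of_bound hv.aestronglyMeasurable 1 (Eventually.of_forall hvR), hF.coeFn_toLp⟩
  rw [MeasureTheory.L2.inner_def] at hinner
  rw [← hinner]
  refine integral_congr_ae ?_
  filter_upwards [hF.coeFn_toLp] with y hy
  rw [hy, RCLike.inner_apply, conj_trivial, mul_comm]

end BoundedKernel

def DiverseWeights {Θ V : Type*} [MeasurableSpace Θ] [NormedAddCommGroup V] (P : Measure Θ)
    (R : ℝ) (w : Θ → V) (W : Θ → Θ → ℝ) : Prop :=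
  ∀ (u₁ : V) (u₂ u₃ : Θ → ℝ),
    Measurable u₂ → (∀ θ, |u₂ θ| ≤ R) → Measurable u₃ → (∀ θ, |u₃ θ| ≤ R) →
    ∀ ε : ℝ, 0 < ε →
      0 < P {θ | ‖w θ - u₁‖ < ε ∧
        Real.sqrt (∫ θ', (W θ' θ - u₂ θ') ^ 2 ∂P) < ε ∧
        Real.sqrt (∫ θ', (W θ θ' - u₃ θ') ^ 2 ∂P) < ε}

lemma DiverseWeights.exists_seq_tendsto {Θ V : Type*} [MeasurableSpace Θ] [NormedAddCommGroup V]
    {P : Measure Θ} [IsProbabilityMeasure P] {R : ℝ} {w : Θ → V} {W : Θ → Θ → ℝ}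
    (hdiv : DiverseWeights P R w W) (hR : 0 ≤ R) (hW : Measurable (Function.uncurry W))
    (hWR : ∀ θ θ', |W θ θ'| ≤ R) (u : V) {v : Θ → ℝ} (hv : Measurable v)
    (hvR : ∀ θ, |v θ| ≤ R) {p : Θ → Prop} (hp : ∀ᵐ θ ∂P, p θ) :
    ∃ θs : ℕ → Θ, (∀ n, p (θs n)) ∧ Tendsto (fun n => w (θs n)) atTop (𝓝 u) ∧
      Tendsto (fun n => ∫ θ', |W (θs n) θ' - v θ'| ∂P) atTop (𝓝 0) := by
  have hpoint : ∀ n : ℕ, ∃ θ, p θ ∧ ‖w θ - u‖ < 1 / ((n : ℝ) + 1) ∧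
      √(∫ θ', (W θ θ' - v θ') ^ 2 ∂P) < 1 / ((n : ℝ) + 1) := by
    intro n
    have hpos := hdiv u 0 v measurable_const (fun _ => by simpa using hR) hv hvR
      (1 / ((n : ℝ) + 1)) (by positivity)
    obtain ⟨θ, hθ, hpθ⟩ := Measure.exists_mem_of_measure_ne_zero_of_ae hpos.ne'
      (ae_restrict_of_ae hp)
    exact ⟨θ, hpθ, hθ.1, hθ.2.2⟩
  choose θs hpθs hwθs hWθs using hpoint
  have hWv : ∀ θ, MemLp (fun θ' => W θ θ' - v θ') 2 P := fun θ =>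
    MemLp.of_bound ((hW.comp (measurable_const.prodMk measurable_id)).sub hv).aestronglyMeasurable
      (R + R) (Eventually.of_forall fun θ' => (abs_sub _ _).trans (add_le_add (hWR θ θ') (hvR θ')))
  refine ⟨θs, hpθs, tendsto_iff_norm_sub_tendsto_zero.mpr ?_, ?_⟩
  · exact squeeze_zero (fun _ => norm_nonneg _) (fun n => (hwθs n).le)
      tendsto_one_div_add_atTop_nhds_zero_nat
  · exact squeeze_zero (fun _ => integral_nonneg fun _ => abs_nonneg _)
      (fun n => (integral_abs_le_sqrt_integral_sq (hWv (θs n))).trans (hWθs n).le)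
      tendsto_one_div_add_atTop_nhds_zero_nat

section Network

variable {Θ : Type*} [MeasurableSpace Θ] {P : Measure Θ} {d : ℕ}
  {T : EuclideanSpace ℝ (Fin d) → EuclideanSpace ℝ (Fin d)} {σ : ℝ → ℝ}
  {w : Θ → EuclideanSpace ℝ (Fin d)} {W : Θ → Θ → ℝ}

lemma abs_Gnet_le {K : ℝ} (hσK : ∀ x, |σ x| ≤ K) :
    ∀ j θ y, |Gnet P T σ w W j θ y| ≤ K
  | 0, _, _ => hσK _
  | _ + 1, _, _ => hσK _

lemma measurable_Gnet [SFinite P] (hσ : Continuous σ) (hT : Measurable T) (hw : Measurable w)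
    (hW : Measurable (Function.uncurry W)) :
    ∀ j, Measurable (Function.uncurry (Gnet P T σ w W j))
  | 0 => hσ.measurable.comp ((hw.comp measurable_fst).inner measurable_snd)
  | j + 1 => by
    have hprod : Measurable fun q : (Θ × EuclideanSpace ℝ (Fin d)) × Θ =>
        W q.1.1 q.2 * Gnet P T σ w W j q.2 q.1.2 :=
      (hW.comp (measurable_fst.fst.prodMk measurable_snd)).mul
        ((measurable_Gnet hσ hT hw hW j).comp (measurable_snd.prodMk measurable_fst.snd))
    exact hσ.measurable.comp
      ((StronglyMeasurable.integral_prod_right' hprod.stronglyMeasurable).measurable.add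
        ((hw.comp measurable_fst).inner ((hT.iterate (j + 1)).comp measurable_snd)))

lemma tendsto_Gnet_succ (hσ : Continuous σ) (hW : ∀ θ, Integrable (W θ) P) {j : ℕ}
    (hG : Measurable (Function.uncurry (Gnet P T σ w W j))) {K : ℝ}
    (hGK : ∀ θ y, |Gnet P T σ w W j θ y| ≤ K) {v : Θ → ℝ} (hv : Integrable v P) {θs : ℕ → Θ}
    (hwθs : Tendsto (fun n => w (θs n)) atTop (𝓝 0))
    (hWθs : Tendsto (fun n => ∫ θ', |W (θs n) θ' - v θ'| ∂P) atTop (𝓝 0))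
    (y : EuclideanSpace ℝ (Fin d)) :
    Tendsto (fun n => Gnet P T σ w W (j + 1) (θs n) y) atTop
      (𝓝 (σ (∫ θ, v θ * Gnet P T σ w W j θ y ∂P))) := by
  have hintegral := tendsto_integral_mul_of_tendsto_integral_abs_sub (fun n => hW (θs n)) hv
    (f := fun θ => Gnet P T σ w W j θ y)
    (hG.comp (measurable_id.prodMk measurable_const)).aestronglyMeasurable (hGK · y) hWθs
  have hinner : Tendsto (fun n => inner ℝ (w (θs n)) (T^[j + 1] y)) atTop (𝓝 0) := by
    simpa using hwθs.inner tendsto_const_nhds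
  have hlim := (hσ.tendsto _).comp (hintegral.add hinner)
  rwa [add_zero] at hlim

variable [IsProbabilityMeasure P] {R K : ℝ} {ν : Measure (EuclideanSpace ℝ (Fin d))}
  {g : EuclideanSpace ℝ (Fin d) → ℝ}

lemma integral_mul_comp_inner_eq_zero (hdiv : DiverseWeights P R w W) (hR : 0 ≤ R)
    (hW : Measurable (Function.uncurry W)) (hWR : ∀ θ θ', |W θ θ'| ≤ R) (hσ : Continuous σ)
    (hG : Measurable (Function.uncurry (Gnet P T σ w W 0)))
    (hGK : ∀ θ y, |Gnet P T σ w W 0 θ y| ≤ K) (hg : Integrable g ν)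
    (h0 : (fun θ => ∫ y, g y * Gnet P T σ w W 0 θ y ∂ν) =ᵐ[P] 0) (u : EuclideanSpace ℝ (Fin d)) :
    ∫ y, g y * σ (inner ℝ u y) ∂ν = 0 := by
  obtain ⟨θs, hθs, hwθs, -⟩ := hdiv.exists_seq_tendsto hR hW hWR u (v := 0) measurable_const
    (fun _ => by simpa using hR) h0
  exact integral_mul_eq_zero_of_tendsto hg
    (fun n => (hG.comp (measurable_const.prodMk measurable_id)).aestronglyMeasurable)
    (fun n => hGK (θs n)) (fun y => (hσ.tendsto _).comp (hwθs.inner tendsto_const_nhds)) hθs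

lemma integral_mul_comp_integral_mul_Gnet_eq_zero (hdiv : DiverseWeights P R w W)
    (hR : 0 ≤ R) (hW : Measurable (Function.uncurry W)) (hWR : ∀ θ θ', |W θ θ'| ≤ R)
    (hσ : Continuous σ) (hG : ∀ j, Measurable (Function.uncurry (Gnet P T σ w W j)))
    (hGK : ∀ j θ y, |Gnet P T σ w W j θ y| ≤ K) (hg : Integrable g ν) {j : ℕ}
    (hj : (fun θ => ∫ y, g y * Gnet P T σ w W (j + 1) θ y ∂ν) =ᵐ[P] 0) {v : Θ → ℝ}
    (hv : Measurable v) (hvR : ∀ θ, |v θ| ≤ R) :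
    ∫ y, g y * σ (∫ θ, v θ * Gnet P T σ w W j θ y ∂P) ∂ν = 0 := by
  obtain ⟨θs, hθs, hwθs, hWθs⟩ := hdiv.exists_seq_tendsto hR hW hWR 0 hv hvR hj
  have hWint : ∀ θ, Integrable (W θ) P := fun θ =>
    .of_bound (hW.comp (measurable_const.prodMk measurable_id)).aestronglyMeasurable R
      (Eventually.of_forall (hWR θ))
  exact integral_mul_eq_zero_of_tendsto hg
    (fun n => ((hG (j + 1)).comp (measurable_const.prodMk measurable_id)).aestronglyMeasurable)
    (fun n => hGK (j + 1) (θs n))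
    (tendsto_Gnet_succ hσ hWint (hG j) (hGK j)
      (.of_bound hv.aestronglyMeasurable R (Eventually.of_forall hvR)) hwθs hWθs) hθs

lemma ae_integral_mul_Gnet_eq_zero_of_succ [SFinite ν] (hdiv : DiverseWeights P R w W)
    (hR : 0 < R) (hW : Measurable (Function.uncurry W)) (hWR : ∀ θ θ', |W θ θ'| ≤ R)
    {Kσ : NNReal} (hσ : LipschitzWith Kσ σ) (hσd : DifferentiableAt ℝ σ 0) (hσ0 : σ 0 = 0)
    (hσ'0 : deriv σ 0 ≠ 0) (hG : ∀ j, Measurable (Function.uncurry (Gnet P T σ w W j)))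
    (hGK : ∀ j θ y, |Gnet P T σ w W j θ y| ≤ K) (hg : Integrable g ν) {j : ℕ}
    (hj : (fun θ => ∫ y, g y * Gnet P T σ w W (j + 1) θ y ∂ν) =ᵐ[P] 0) :
    (fun θ => ∫ y, g y * Gnet P T σ w W j θ y ∂ν) =ᵐ[P] 0 := by
  refine ae_eq_zero_of_forall_integral_mul_eq_zero
    (integrable_integral_mul_kernel (hG j) (hGK j) hg) hR fun v hv hvR => ?_
  rw [integral_mul_integral_mul_comm (hG j) (hGK j)
    (.of_bound hv.aestronglyMeasurable R (Eventually.of_forall hvR)) hg]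
  refine integral_mul_eq_zero_of_integral_mul_comp_div_eq_zero hσ hσd.hasDerivAt hσ0 hσ'0 hg
    (measurable_integral_mul_kernel hv (hG j)).aestronglyMeasurable
    (fun y => abs_integral_mul_le_mul hvR (hGK j · y)) fun n => ?_
  have hvnR : ∀ θ, |v θ / ((n : ℝ) + 1)| ≤ R := fun θ => by
    rw [abs_div, abs_of_pos (by positivity : (0 : ℝ) < n + 1)]
    exact (div_le_self (abs_nonneg _) (by simp)).trans (hvR θ)
  simpa only [div_mul_eq_mul_div, integral_div] using
    integral_mul_comp_integral_mul_Gnet_eq_zero hdiv hR.le hW hWR hσ.continuous hG hGK hg hj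
      (hv.div_const _) hvnR

end Network

theorem statement3_general
    (Θ : Type*) [MeasurableSpace Θ] (P : Measure Θ) [IsProbabilityMeasure P]
    (d : ℕ) (T : EuclideanSpace ℝ (Fin d) → EuclideanSpace ℝ (Fin d)) (hT : Measurable T)
    (ν₀ : Measure (EuclideanSpace ℝ (Fin d))) [IsProbabilityMeasure ν₀]
    (L : ℕ) (R K : ℝ) (hR : 0 < R)
    (σ : ℝ → ℝ)
    (hσbdd : ∀ x : ℝ, |σ x| ≤ K) (hσlip : LipschitzWith (Real.toNNReal K) σ)
    (hσdiff : Differentiable ℝ σ) (hσ0 : σ 0 = 0) (hσ'0 : deriv σ 0 ≠ 0)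
    (w : Θ → EuclideanSpace ℝ (Fin d)) (hw : Measurable w)
    (W : Θ → Θ → ℝ) (hW : Measurable (Function.uncurry W))
    (hWbdd : ∀ θ θ', |W θ θ'| ≤ R)
    -- (b) universal approximation
    (hUA : ∀ g : EuclideanSpace ℝ (Fin d) → ℝ, MemLp g 2 ν₀ →
      (∀ u : EuclideanSpace ℝ (Fin d), ∫ x, g x * σ (inner ℝ u x) ∂ν₀ = 0) → g =ᵐ[ν₀] 0)
    -- (c) diversity of the weights
    (hdiv : ∀ (u₁ : EuclideanSpace ℝ (Fin d)) (u₂ u₃ : Θ → ℝ),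
      Measurable u₂ → (∀ θ, |u₂ θ| ≤ R) → Measurable u₃ → (∀ θ, |u₃ θ| ≤ R) →
      ∀ ε : ℝ, 0 < ε →
        0 < P {θ | ‖w θ - u₁‖ < ε ∧
          Real.sqrt (∫ θ', (W θ' θ - u₂ θ') ^ 2 ∂P) < ε ∧
          Real.sqrt (∫ θ', (W θ θ' - u₃ θ') ^ 2 ∂P) < ε}) :
    Dense {F : Lp ℝ 2 ν₀ | ∃ a : Θ → ℝ, MemLp a 2 P ∧
      (F : EuclideanSpace ℝ (Fin d) → ℝ) =ᵐ[ν₀]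
        fun y => ∫ θ, a θ * Gnet P T σ w W L θ y ∂P} := by
  have hG := measurable_Gnet (P := P) hσlip.continuous hT hw hW
  have hGK := abs_Gnet_le (P := P) (T := T) (w := w) (W := W) hσbdd
  change Dense (outputSubmodule P ν₀ (Gnet P T σ w W L) (hG L) (hGK L) : Set (Lp ℝ 2 ν₀))
  rw [Submodule.dense_iff_topologicalClosure_eq_top, Submodule.topologicalClosure_eq_top_iff,
    Submodule.eq_bot_iff]
  intro g hg
  have hgi : Integrable g ν₀ := (Lp.memLp g).integrable one_le_two
  have hdescent : ∀ j, (fun θ => ∫ y, g y * Gnet P T σ w W j θ y ∂ν₀) =ᵐ[P] 0 →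
      (fun θ => ∫ y, g y * Gnet P T σ w W 0 θ y ∂ν₀) =ᵐ[P] 0 := by
    intro j
    induction j with
    | zero => exact id
    | succ j ih => exact fun hj => ih (ae_integral_mul_Gnet_eq_zero_of_succ hdiv hR hW hWbdd
        hσlip (hσdiff 0) hσ0 hσ'0 hG hGK hgi hj)
  have hneuron := integral_mul_comp_inner_eq_zero hdiv hR.le hW hWbdd hσlip.continuous (hG 0)
    (hGK 0) hgi (hdescent L (ae_integral_mul_eq_zero_of_mem_orthogonal (hG L) (hGK L) hg))
  exact Lp.eq_zero_iff_ae_eq_zero.mpr (hUA g (Lp.memLp g) hneuron)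

/-- Under regularity of `σ`, universal approximation for single neurons, and
diversity of the weights, the set of realizable network outputs
`{y ↦ ∫ a(θ) G(θ; y, 0) dP(θ) : a ∈ L²(P)}` is dense in `L²(ν₀)`. -/
theorem statement3
    (Θ : Type*) [MeasurableSpace Θ] (P : Measure Θ) [IsProbabilityMeasure P]
    (d : ℕ) (T : EuclideanSpace ℝ (Fin d) → EuclideanSpace ℝ (Fin d)) (hT : Measurable T)
    (ν₀ : Measure (EuclideanSpace ℝ (Fin d))) [IsProbabilityMeasure ν₀]
    (hmom : Integrable (fun y => ‖y‖ ^ 2) ν₀)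
    (L : ℕ) (R K : ℝ) (hR : 0 < R) (hRK : R ≤ K)
    (σ : ℝ → ℝ)
    (hσbdd : ∀ x : ℝ, |σ x| ≤ K) (hσlip : LipschitzWith (Real.toNNReal K) σ)
    (hσdiff : Differentiable ℝ σ) (hσ0 : σ 0 = 0) (hσ'0 : deriv σ 0 ≠ 0)
    (hσ'bdd : ∀ x : ℝ, |deriv σ x| ≤ K)
    (hσ'lip : LipschitzWith (Real.toNNReal K) (deriv σ))
    (w : Θ → EuclideanSpace ℝ (Fin d)) (hw : Measurable w)
    (W : Θ → Θ → ℝ) (hW : Measurable (Function.uncurry W))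
    (hWbdd : ∀ θ θ', |W θ θ'| ≤ R)
    -- (b) universal approximation
    (hUA : ∀ g : EuclideanSpace ℝ (Fin d) → ℝ, MemLp g 2 ν₀ →
      (∀ u : EuclideanSpace ℝ (Fin d), ∫ x, g x * σ (inner ℝ u x) ∂ν₀ = 0) → g =ᵐ[ν₀] 0)
    -- (c) diversity of the weights
    (hdiv : ∀ (u₁ : EuclideanSpace ℝ (Fin d)) (u₂ u₃ : Θ → ℝ),
      Measurable u₂ → (∀ θ, |u₂ θ| ≤ R) → Measurable u₃ → (∀ θ, |u₃ θ| ≤ R) →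
      ∀ ε : ℝ, 0 < ε →
        0 < P {θ | ‖w θ - u₁‖ < ε ∧
          Real.sqrt (∫ θ', (W θ' θ - u₂ θ') ^ 2 ∂P) < ε ∧
          Real.sqrt (∫ θ', (W θ θ' - u₃ θ') ^ 2 ∂P) < ε}) :
    Dense {F : Lp ℝ 2 ν₀ | ∃ a : Θ → ℝ, MemLp a 2 P ∧
      (F : EuclideanSpace ℝ (Fin d) → ℝ) =ᵐ[ν₀]
        fun y => ∫ θ, a θ * Gnet P T σ w W L θ y ∂P} :=
  statement3_general Θ P d T hT ν₀ L R K hR σ hσbdd hσlip hσdiff hσ0 hσ'0 w hw W hW hWbdd hUA hdiv
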